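/- Sign relation between second derivatives: at a critical point σ̄ of the dual with σ̄ ≠ -y/2, G(σ̄) ≠ 0 and σ̄ + y > 0, one has (P^d)''(σ̄) = -((2σ̄+y)/(G(σ̄)(σ̄+y)))·P''(c(σ̄)). In particular, if (2σ̄+y) > 0 and G(σ̄) > 0 then (P^d)''(σ̄) and P''(c(σ̄)) have opposite signs, while if (2σ̄+y) > 0 and G(σ̄) < 0 they have the same sign. -/

import Mathlib

noncomputable def primalP (w x y α β c : ℝ) : ℝ :=
  (1/2) * (w * Real.exp (-(x - c)^2 / (2 * α^2)) - y)^2 + (1/2) * β * c^2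

noncomputable def dualG (y α β σ : ℝ) : ℝ := β - (σ^2 + y * σ) / α^2

noncomputable def dualF (x y α σ : ℝ) : ℝ := -x * (σ^2 + y * σ) / α^2

noncomputable def dualPd (w x y α β σ : ℝ) : ℝ :=
  -(1/2) * (dualF x y α σ)^2 / (dualG y α β σ)
    - Real.log ((σ + y) / w) * (σ^2 + y * σ)
    + (1/2) * σ^2 - x^2 * (σ^2 + y * σ) / (2 * α^2)

/-!
Writing `c(σ) = F(σ)/G(σ)`, the terms of `(P^d)'` coming from `σ²/2` and from differentiating the
logarithm cancel, and `(P^d)'(σ) = (2σ + y) R(σ)` with `R(σ) = -(x - c(σ))²/(2α²) - ln((σ + y)/w)`.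
A critical point in the sense of the statement is a zero of `R`, so there
`(P^d)''(σ̄) = (2σ̄ + y) R'(σ̄)`, and `c' = (2σ + y)(c - x)/(α² G)` gives
`R'(σ̄) = -(2σ̄ + y)(x - c̄)²/(α⁴ G) - 1/(σ̄ + y)`.
On the primal side, `R(σ̄) = 0` says exactly that the Gaussian `w e^{-(x - c̄)²/(2α²)}` equals
`σ̄ + y`, which turns `P''(c̄)` into
`G(σ̄) + (2σ̄ + y)(σ̄ + y)(x - c̄)²/α⁴ = -G(σ̄)(σ̄ + y) R'(σ̄)`.
-/

open Real Filter Topology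

noncomputable def dualC (x y α β σ : ℝ) : ℝ := dualF x y α σ / dualG y α β σ

noncomputable def dualResidual (w x y α β σ : ℝ) : ℝ :=
  -(x - dualC x y α β σ)^2 / (2 * α^2) - log ((σ + y) / w)

lemma hasDerivAt_quadratic (y σ : ℝ) :
    HasDerivAt (fun σ : ℝ => σ^2 + y * σ) (2 * σ + y) σ :=
  ((hasDerivAt_pow 2 σ).add ((hasDerivAt_id' σ).const_mul y)).congr_deriv (by ring)

lemma hasDerivAt_dualF (x y α σ : ℝ) :
    HasDerivAt (dualF x y α) (-x * (2 * σ + y) / α^2) σ :=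
  ((hasDerivAt_quadratic y σ).const_mul (-x)).div_const (α^2)

lemma hasDerivAt_dualG (y α β σ : ℝ) :
    HasDerivAt (dualG y α β) (-((2 * σ + y) / α^2)) σ :=
  ((hasDerivAt_quadratic y σ).div_const (α^2)).const_sub β

section Dual

variable {w x y α β : ℝ}

lemma hasDerivAt_dualC {σ : ℝ} (hG : dualG y α β σ ≠ 0) :
    HasDerivAt (dualC x y α β)
      ((2 * σ + y) * (dualC x y α β σ - x) / (α^2 * dualG y α β σ)) σ := by
  refine ((hasDerivAt_dualF x y α σ).div (hasDerivAt_dualG y α β σ) hG).congr_deriv ?_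
  rw [dualC]
  field_simp
  ring

lemma hasDerivAt_log_div {σ : ℝ} (hw : w ≠ 0) (hσ : σ + y ≠ 0) :
    HasDerivAt (fun σ => log ((σ + y) / w)) (1 / (σ + y)) σ := by
  refine ((((hasDerivAt_id' σ).add_const y).div_const w).log (div_ne_zero hσ hw)).congr_deriv ?_
  field_simp

lemma hasDerivAt_dualPd {σ : ℝ} (hw : w ≠ 0) (hσ : σ + y ≠ 0)
    (hG : dualG y α β σ ≠ 0) :
    HasDerivAt (dualPd w x y α β) ((2 * σ + y) * dualResidual w x y α β σ) σ := by
  have h := (((((hasDerivAt_dualF x y α σ).pow 2).const_mul (-(1/2))).div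
    (hasDerivAt_dualG y α β σ) hG).sub ((hasDerivAt_log_div hw hσ).mul
    (hasDerivAt_quadratic y σ))).add ((hasDerivAt_pow 2 σ).const_mul (1/2)) |>.sub
    (((hasDerivAt_quadratic y σ).const_mul (x^2)).div_const (2 * α^2))
  refine h.congr_deriv ?_
  simp only [dualResidual, dualC, Pi.pow_apply]
  field_simp
  ring

lemma hasDerivAt_dualResidual {σ : ℝ} (hw : w ≠ 0) (hσ : σ + y ≠ 0)
    (hG : dualG y α β σ ≠ 0) :
    HasDerivAt (dualResidual w x y α β)
      (-(2 * σ + y) * (x - dualC x y α β σ)^2 / (α^4 * dualG y α β σ) - 1 / (σ + y)) σ := by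
  have h := ((((hasDerivAt_dualC (x := x) hG).const_sub x).pow 2).neg.div_const (2 * α^2)).sub
    (hasDerivAt_log_div hw hσ)
  refine h.congr_deriv ?_
  field_simp
  ring

lemma eventuallyEq_deriv_dualPd {σ : ℝ} (hw : w ≠ 0) (hσ : σ + y ≠ 0)
    (hG : dualG y α β σ ≠ 0) :
    deriv (dualPd w x y α β) =ᶠ[𝓝 σ] fun τ => (2 * τ + y) * dualResidual w x y α β τ := by
  have hσ' : ∀ᶠ τ in 𝓝 σ, τ + y ≠ 0 :=
    ((continuous_id.add continuous_const).continuousAt).eventually_ne hσ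
  have hG' : ∀ᶠ τ in 𝓝 σ, dualG y α β τ ≠ 0 :=
    (hasDerivAt_dualG y α β σ).continuousAt.eventually_ne hG
  filter_upwards [hσ', hG'] with τ hτ hGτ
  exact (hasDerivAt_dualPd hw hτ hGτ).deriv

lemma deriv_deriv_dualPd_of_dualResidual_eq_zero {σ : ℝ} (hw : w ≠ 0) (hσ : σ + y ≠ 0)
    (hG : dualG y α β σ ≠ 0) (hres : dualResidual w x y α β σ = 0) :
    deriv (deriv (dualPd w x y α β)) σ = (2 * σ + y) *
      (-(2 * σ + y) * (x - dualC x y α β σ)^2 / (α^4 * dualG y α β σ) - 1 / (σ + y)) := by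
  have hlin : HasDerivAt (fun τ : ℝ => 2 * τ + y) 2 σ :=
    ((hasDerivAt_id' σ).const_mul 2).add_const y |>.congr_deriv (mul_one 2)
  rw [(eventuallyEq_deriv_dualPd hw hσ hG).deriv_eq,
    (hlin.fun_mul (hasDerivAt_dualResidual hw hσ hG)).deriv, hres]
  ring

end Dual

lemma hasDerivAt_gaussian (w x α c : ℝ) :
    HasDerivAt (fun c => w * exp (-(x - c)^2 / (2 * α^2)))
      (w * exp (-(x - c)^2 / (2 * α^2)) * ((x - c) / α^2)) c := by
  have h := ((((hasDerivAt_id' c).const_sub x).fun_pow 2).fun_neg.div_const (2 * α^2)).exp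
    |>.const_mul w
  refine h.congr_deriv ?_
  field_simp
  ring

section Primal

variable {w x y α β : ℝ}

lemma hasDerivAt_primalP (c : ℝ) :
    HasDerivAt (primalP w x y α β)
      ((w * exp (-(x - c)^2 / (2 * α^2)) - y) * (w * exp (-(x - c)^2 / (2 * α^2))) *
        ((x - c) / α^2) + β * c) c := by
  have h := (((hasDerivAt_gaussian w x α c).sub_const y).fun_pow 2 |>.const_mul (1/2)).add
    ((hasDerivAt_pow 2 c).const_mul ((1/2) * β))
  refine h.congr_deriv ?_
  ring

lemma deriv_deriv_primalP (c : ℝ) :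
    deriv (deriv (primalP w x y α β)) c =
      (2 * (w * exp (-(x - c)^2 / (2 * α^2))) - y) * (w * exp (-(x - c)^2 / (2 * α^2))) *
        (x - c)^2 / α^4 -
      (w * exp (-(x - c)^2 / (2 * α^2)) - y) * (w * exp (-(x - c)^2 / (2 * α^2))) / α^2 + β := by
  have hderiv : deriv (primalP w x y α β) = fun c =>
      (w * exp (-(x - c)^2 / (2 * α^2)) - y) * (w * exp (-(x - c)^2 / (2 * α^2))) *
        ((x - c) / α^2) + β * c :=
    funext fun c => (hasDerivAt_primalP c).deriv
  have hlin : HasDerivAt (fun c : ℝ => (x - c) / α^2) (-1 / α^2) c :=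
    ((hasDerivAt_id' c).const_sub x).div_const (α^2)
  rw [hderiv, ((((hasDerivAt_gaussian w x α c).sub_const y).fun_mul
    (hasDerivAt_gaussian w x α c)).fun_mul hlin |>.fun_add ((hasDerivAt_id' c).const_mul β)).deriv]
  field_simp
  ring

end Primal

section CriticalPoint

variable {w x y α β σ : ℝ}

lemma dualResidual_eq_zero_iff (hα : α ≠ 0) :
    dualResidual w x y α β σ = 0 ↔
      (x - dualC x y α β σ)^2 = -2 * α^2 * log ((σ + y) / w) := by
  rw [dualResidual, sub_eq_zero, div_eq_iff (by positivity)]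
  constructor <;> intro h <;> linarith

lemma gaussian_eq_of_dualResidual_eq_zero (hw : 0 < w) (hσ : 0 < σ + y)
    (hres : dualResidual w x y α β σ = 0) :
    w * exp (-(x - dualC x y α β σ)^2 / (2 * α^2)) = σ + y := by
  rw [dualResidual, sub_eq_zero] at hres
  rw [hres, exp_log (div_pos hσ hw)]
  field_simp

lemma deriv_deriv_primalP_dualC_of_dualResidual_eq_zero (hw : 0 < w) (hσ : 0 < σ + y)
    (hres : dualResidual w x y α β σ = 0) :
    deriv (deriv (primalP w x y α β)) (dualC x y α β σ) =
      dualG y α β σ + (2 * σ + y) * (σ + y) * (x - dualC x y α β σ)^2 / α^4 := by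
  rw [deriv_deriv_primalP, gaussian_eq_of_dualResidual_eq_zero hw hσ hres, dualG]
  ring

end CriticalPoint

theorem second_derivative_sign_relation_general
    (w x y α β sb : ℝ) (hw : 0 < w)
    (hα : α ≠ 0)
    (hG : dualG y α β sb ≠ 0) (hsy : 0 < sb + y)
    (hcrit : (x - dualF x y α sb / dualG y α β sb)^2 =
      -2 * α^2 * Real.log ((sb + y) / w)) :
    deriv (deriv (fun σ => dualPd w x y α β σ)) sb =
        -((2 * sb + y) / (dualG y α β sb * (sb + y))) *
          deriv (deriv (fun c => primalP w x y α β c))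
            (dualF x y α sb / dualG y α β sb) ∧
    ((0 < 2 * sb + y ∧ 0 < dualG y α β sb →
      (0 < deriv (deriv (fun σ => dualPd w x y α β σ)) sb ↔
        deriv (deriv (fun c => primalP w x y α β c))
          (dualF x y α sb / dualG y α β sb) < 0)) ∧
     (0 < 2 * sb + y ∧ dualG y α β sb < 0 →
      (0 < deriv (deriv (fun σ => dualPd w x y α β σ)) sb ↔
        0 < deriv (deriv (fun c => primalP w x y α β c))
          (dualF x y α sb / dualG y α β sb)))) := by
  have hres : dualResidual w x y α β sb = 0 := (dualResidual_eq_zero_iff hα).mpr hcrit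
  have hrel : deriv (deriv (dualPd w x y α β)) sb =
      -((2 * sb + y) / (dualG y α β sb * (sb + y))) *
        deriv (deriv (primalP w x y α β)) (dualC x y α β sb) := by
    rw [deriv_deriv_dualPd_of_dualResidual_eq_zero hw.ne' hsy.ne' hG hres,
      deriv_deriv_primalP_dualC_of_dualResidual_eq_zero hw hsy hres]
    field_simp
    ring
  refine ⟨hrel, fun ⟨hlin, hGpos⟩ => ?_, fun ⟨hlin, hGneg⟩ => ?_⟩ <;> rw [hrel]
  · rw [neg_mul_comm]
    exact (mul_pos_iff_of_pos_left (div_pos hlin (mul_pos hGpos hsy))).trans neg_pos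
  · exact mul_pos_iff_of_pos_left
      (neg_pos.mpr (div_neg_of_pos_of_neg hlin (mul_neg_of_neg_of_pos hGneg hsy)))

/-- Sign relation between second derivatives at a dual critical point σ̄ ≠ -y/2:
(P^d)''(σ̄) = -((2σ̄+y)/(G(σ̄)(σ̄+y)))·P''(c(σ̄)); consequently, if 2σ̄+y > 0 and
G(σ̄) > 0 they have opposite signs, while if 2σ̄+y > 0 and G(σ̄) < 0 they have
the same sign. -/
theorem second_derivative_sign_relation
    (w x y α β sb : ℝ) (hw : 0 < w) (hy : 0 < y) (hyw : y < w)
    (hα : α ≠ 0) (hβ : 0 < β)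
    (hmem : sb ∈ Set.Ioo (-y) (w - y))
    (hne : sb ≠ -y / 2) (hG : dualG y α β sb ≠ 0) (hsy : 0 < sb + y)
    (hcrit : (x - dualF x y α sb / dualG y α β sb)^2 =
      -2 * α^2 * Real.log ((sb + y) / w)) :
    deriv (deriv (fun σ => dualPd w x y α β σ)) sb =
        -((2 * sb + y) / (dualG y α β sb * (sb + y))) *
          deriv (deriv (fun c => primalP w x y α β c))
            (dualF x y α sb / dualG y α β sb) ∧
    ((0 < 2 * sb + y ∧ 0 < dualG y α β sb →
      (0 < deriv (deriv (fun σ => dualPd w x y α β σ)) sb ↔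
        deriv (deriv (fun c => primalP w x y α β c))
          (dualF x y α sb / dualG y α β sb) < 0)) ∧
     (0 < 2 * sb + y ∧ dualG y α β sb < 0 →
      (0 < deriv (deriv (fun σ => dualPd w x y α β σ)) sb ↔
        0 < deriv (deriv (fun c => primalP w x y α β c))
          (dualF x y α sb / dualG y α β sb)))) :=
  second_derivative_sign_relation_general w x y α β sb hw hα hG hsy hcrit
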